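/- arXiv:1211.5547 — 4 statements merged into one kernel-verified Lean document; each statement's English description precedes it below -/
import Mathlib

section
/- Euler–MacLaurin formula for the index of ∂̄_A on P¹ (polynomials of degree ≤ 3): for every natural number A and every real polynomial f with deg f ≤ 3, one has ∑_{d=0}^{A} f(d) = ∫_ℝ m₀(ξ) f(ξ) dξ + (1/12)(f(0) + f(A) − f(−1) − f(A+1)) − (1/240)(f''(0) + f''(A) − f''(−1) − f''(A+1)). -/
open MeasureTheory Polynomial

/-- The trapezoid function `m₀`. -/
noncomputable def m₀ (A : ℕ) (ξ : ℝ) : ℝ :=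
  if ξ ≤ -1 then 0
  else if ξ ≤ 0 then ξ + 1
  else if ξ ≤ A then 1
  else if ξ ≤ A + 1 then A + 1 - ξ
  else 0

lemma m₀_cont (A : ℕ) : Continuous (m₀ A) := by
  unfold m₀
  apply Continuous.if_le _ _ continuous_id continuous_const
  · intro x hx
    subst hx
    norm_num
  · exact continuous_const
  · apply Continuous.if_le _ _ continuous_id continuous_const
    · intro x hx; subst hx; norm_num
    · exact continuous_id.add continuous_const
    · apply Continuous.if_le _ _ continuous_id continuous_const
      · intro x hx; subst hx; norm_num
      · exact continuous_const
      · apply Continuous.if_le _ _ continuous_id continuous_const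
        · intro x hx; subst hx; norm_num
        · exact (continuous_const.sub continuous_id)
        · exact continuous_const

lemma m₀_supp (A : ℕ) (ξ : ℝ) (h : ξ ∉ Set.Ioc (-1 : ℝ) (A + 1)) : m₀ A ξ = 0 := by
  simp only [Set.mem_Ioc, not_and_or, not_lt, not_le] at h
  unfold m₀
  rcases h with h | h
  · simp [h]
  · have h0 : (0:ℝ) ≤ A := by positivity
    rw [if_neg (by linarith), if_neg (by linarith), if_neg (by linarith), if_neg (by linarith)]

lemma m₀_integrable (A : ℕ) (g : ℝ → ℝ) (hg : Continuous g) :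
    Integrable (fun ξ => m₀ A ξ * g ξ) := by
  apply Continuous.integrable_of_hasCompactSupport ((m₀_cont A).mul hg)
  apply HasCompactSupport.intro (isCompact_Icc (a := (-1:ℝ)) (b := (A:ℝ)+1))
  intro x hx
  have : x ∉ Set.Ioc (-1:ℝ) (A+1) := fun h => hx ⟨le_of_lt h.1, h.2⟩
  simp [m₀_supp A x this]

lemma m₀_split (A : ℕ) (g : ℝ → ℝ) (hg : Continuous g) :
    (∫ ξ : ℝ, m₀ A ξ * g ξ) =
      (∫ ξ in (-1:ℝ)..0, (ξ + 1) * g ξ) + (∫ ξ in (0:ℝ)..(A:ℝ), g ξ)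
        + (∫ ξ in (A:ℝ)..((A:ℝ)+1), ((A:ℝ) + 1 - ξ) * g ξ) := by
  have h0 : (0:ℝ) ≤ A := by positivity
  have hI : ∀ a b : ℝ, IntervalIntegrable (fun ξ => m₀ A ξ * g ξ) volume a b :=
    fun a b => ((m₀_cont A).mul hg).intervalIntegrable a b
  rw [← setIntegral_eq_integral_of_forall_compl_eq_zero
      (s := Set.Ioc (-1:ℝ) ((A:ℝ)+1)) (fun x hx => by rw [m₀_supp A x hx, zero_mul]),
    ← intervalIntegral.integral_of_le (by linarith),
    ← intervalIntegral.integral_add_adjacent_intervals (hI (-1) 0) (hI 0 ((A:ℝ)+1)),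
    ← intervalIntegral.integral_add_adjacent_intervals (hI 0 (A:ℝ)) (hI (A:ℝ) ((A:ℝ)+1)),
    ← add_assoc]
  congr 1
  · congr 1
    · apply intervalIntegral.integral_congr
      intro x hx
      dsimp only
      rw [Set.uIcc_of_le (by norm_num)] at hx
      unfold m₀
      rcases eq_or_lt_of_le hx.1 with h | h
      · simp [← h]
      · rw [if_neg (by linarith), if_pos hx.2]
    · apply intervalIntegral.integral_congr
      intro x hx
      dsimp only
      rw [Set.uIcc_of_le h0] at hx
      unfold m₀
      rcases eq_or_lt_of_le hx.1 with h | h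
      · rw [if_neg (by simp [← h]), if_pos (by simp [← h]), ← h]; norm_num
      · rw [if_neg (by linarith), if_neg (by linarith), if_pos hx.2, one_mul]
  · apply intervalIntegral.integral_congr
    intro x hx
    dsimp only
    rw [Set.uIcc_of_le (by linarith)] at hx
    unfold m₀
    rcases eq_or_lt_of_le hx.1 with h | h
    · rcases eq_or_lt_of_le h0 with h0' | h0'
      · rw [if_neg (by rw [← h, ← h0']; norm_num), if_pos (by rw [← h, ← h0']),
          ← h, ← h0']
        norm_num
      · rw [if_neg (by linarith), if_neg (by rw [← h]; linarith),
          if_pos (by rw [← h]), ← h]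
        ring
    · rw [if_neg (by linarith), if_neg (by linarith), if_neg (by linarith), if_pos hx.2]

lemma int4 (a b p q r s t : ℝ) :
    (∫ x in a..b, (p + q * x + r * x ^ 2 + s * x ^ 3 + t * x ^ 4)) =
      p * (b - a) + q * (b ^ 2 - a ^ 2) / 2 + r * (b ^ 3 - a ^ 3) / 3
        + s * (b ^ 4 - a ^ 4) / 4 + t * (b ^ 5 - a ^ 5) / 5 := by
  have h : ∀ x ∈ Set.uIcc a b, HasDerivAt
      (fun x : ℝ => p * x + q * x ^ 2 / 2 + r * x ^ 3 / 3 + s * x ^ 4 / 4 + t * x ^ 5 / 5)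
      (p + q * x + r * x ^ 2 + s * x ^ 3 + t * x ^ 4) x := by
    intro x _
    have : HasDerivAt
        (fun x : ℝ => p * x + q * x ^ 2 / 2 + r * x ^ 3 / 3 + s * x ^ 4 / 4 + t * x ^ 5 / 5)
        (p * 1 + q * (2 * x ^ 1) / 2 + r * (3 * x ^ 2) / 3 + s * (4 * x ^ 3) / 4
          + t * (5 * x ^ 4) / 5) x := by
      exact (((((hasDerivAt_id x).const_mul p).add
        (((hasDerivAt_pow 2 x).const_mul q).div_const 2)).add
        (((hasDerivAt_pow 3 x).const_mul r).div_const 3)).add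
        (((hasDerivAt_pow 4 x).const_mul s).div_const 4)).add
        (((hasDerivAt_pow 5 x).const_mul t).div_const 5)
    convert this using 1
    ring
  rw [intervalIntegral.integral_eq_sub_of_hasDerivAt h (by apply Continuous.intervalIntegrable; continuity)]
  ring

lemma sum_pows (A : ℕ) (c0 c1 c2 c3 : ℝ) :
    ∑ d ∈ Finset.range (A + 1),
        (c0 + c1 * (d : ℝ) + c2 * (d : ℝ) ^ 2 + c3 * (d : ℝ) ^ 3) =
      c0 * (A + 1) + c1 * (A * (A + 1) / 2) + c2 * (A * (A + 1) * (2 * A + 1) / 6)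
        + c3 * ((A : ℝ) ^ 2 * (A + 1) ^ 2 / 4) := by
  induction A with
  | zero => norm_num
  | succ n ih =>
    rw [Finset.sum_range_succ, ih]
    push_cast
    ring

/-- Euler–MacLaurin formula for the index of `∂̄_A` on `P¹`, for polynomials of
degree at most `3`. -/
theorem stmt4 (A : ℕ) (f : Polynomial ℝ) (hf : f.degree ≤ 3) :
    ∑ d ∈ Finset.range (A + 1), f.eval (d : ℝ) =
      (∫ ξ : ℝ, m₀ A ξ * f.eval ξ)
      + (1 / 12) * (f.eval 0 + f.eval (A : ℝ) - f.eval (-1) - f.eval ((A : ℝ) + 1))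
      - (1 / 240) * ((derivative (derivative f)).eval 0 + (derivative (derivative f)).eval (A : ℝ)
          - (derivative (derivative f)).eval (-1) - (derivative (derivative f)).eval ((A : ℝ) + 1)) := by
  have hn : f.natDegree < 4 :=
    Nat.lt_succ_of_le (natDegree_le_iff_degree_le.mpr (by exact_mod_cast hf))
  set c0 := f.coeff 0
  set c1 := f.coeff 1
  set c2 := f.coeff 2
  set c3 := f.coeff 3
  have heval : ∀ x : ℝ, f.eval x = c0 + c1 * x + c2 * x ^ 2 + c3 * x ^ 3 := by
    intro x
    rw [eval_eq_sum_range' hn x]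
    simp only [Finset.sum_range_succ, Finset.sum_range_zero]
    ring
  have hD : ∀ x : ℝ, (derivative (derivative f)).eval x = 2 * c2 + 6 * c3 * x := by
    intro x
    have h2 : (derivative (derivative f)).natDegree < 2 := by
      have := natDegree_derivative_le (derivative f)
      have := natDegree_derivative_le f
      omega
    rw [eval_eq_sum_range' h2 x]
    simp [Finset.sum_range_succ, coeff_derivative, c2, c3]
    ring
  have hg : Continuous fun x : ℝ => c0 + c1 * x + c2 * x ^ 2 + c3 * x ^ 3 := by continuity
  have hint : (∫ ξ : ℝ, m₀ A ξ * f.eval ξ)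
      = (∫ ξ in (-1:ℝ)..0, (ξ + 1) * (c0 + c1 * ξ + c2 * ξ ^ 2 + c3 * ξ ^ 3))
        + (∫ ξ in (0:ℝ)..(A:ℝ), (c0 + c1 * ξ + c2 * ξ ^ 2 + c3 * ξ ^ 3))
        + (∫ ξ in (A:ℝ)..((A:ℝ)+1), ((A:ℝ) + 1 - ξ) * (c0 + c1 * ξ + c2 * ξ ^ 2 + c3 * ξ ^ 3)) := by
    simp only [heval]
    exact m₀_split A _ hg
  have e1 : (∫ ξ in (-1:ℝ)..0, (ξ + 1) * (c0 + c1 * ξ + c2 * ξ ^ 2 + c3 * ξ ^ 3))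
      = (∫ ξ in (-1:ℝ)..0, (c0 + (c0 + c1) * ξ + (c1 + c2) * ξ ^ 2 + (c2 + c3) * ξ ^ 3
          + c3 * ξ ^ 4)) :=
    intervalIntegral.integral_congr (fun x _ => by ring)
  have e2 : (∫ ξ in (0:ℝ)..(A:ℝ), (c0 + c1 * ξ + c2 * ξ ^ 2 + c3 * ξ ^ 3))
      = (∫ ξ in (0:ℝ)..(A:ℝ), (c0 + c1 * ξ + c2 * ξ ^ 2 + c3 * ξ ^ 3 + 0 * ξ ^ 4)) :=
    intervalIntegral.integral_congr (fun x _ => by ring)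
  have e3 : (∫ ξ in (A:ℝ)..((A:ℝ)+1), ((A:ℝ) + 1 - ξ) * (c0 + c1 * ξ + c2 * ξ ^ 2 + c3 * ξ ^ 3))
      = (∫ ξ in (A:ℝ)..((A:ℝ)+1), ((((A:ℝ)+1) * c0) + (((A:ℝ)+1) * c1 - c0) * ξ
          + (((A:ℝ)+1) * c2 - c1) * ξ ^ 2 + (((A:ℝ)+1) * c3 - c2) * ξ ^ 3 + (-c3) * ξ ^ 4)) :=
    intervalIntegral.integral_congr (fun x _ => by ring)
  rw [hint, e1, e2, e3, int4, int4, int4]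
  simp only [heval, hD]
  rw [sum_pows]
  ring
end

section
/- Euler–MacLaurin formula for the index of ∂̄_A on P¹ (polynomials of degree ≤ 5): for every natural number A and every real polynomial f with deg f ≤ 5, one has ∑_{d=0}^{A} f(d) = ∫_ℝ m₀(ξ) f(ξ) dξ + (1/12)(f(0) + f(A) − f(−1) − f(A+1)) − (1/240)(f''(0) + f''(A) − f''(−1) − f''(A+1)) + (1/6048)(f''''(0) + f''''(A) − f''''(−1) − f''''(A+1)). -/
open MeasureTheory Polynomial

/-!
The trapezoid `m₀ A` is the sum of the hat functions `hat d`, `d = 0, …, A`. Integrating by parts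
twice, `∫ hat c · P'' = Δ²P c := P (c - 1) - 2 P c + P (c + 1)`. For `deg P ≤ 7` Taylor expansion
gives `Δ²P = P'' + P/12 + P⁽⁶⁾/360`, whence `P = Δ²P - Δ²P/12 + Δ²P/240 - Δ²P⁽⁶⁾/6048`.
Applied with `P'' = f` at `c = d` and summed over `d = 0, …, A`, the second differences telescope
to the boundary terms.
-/

noncomputable def hat (c x : ℝ) : ℝ := max 0 (1 - |x - c|)

theorem continuous_hat (c : ℝ) : Continuous (hat c) := by
  unfold hat; fun_prop

theorem hat_eq_zero_of_notMem {c x : ℝ} (hx : x ∉ Set.Ioo (c - 1) (c + 1)) : hat c x = 0 := by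
  rw [Set.mem_Ioo, not_and_or, not_lt, not_lt] at hx
  refine max_eq_left ?_
  rcases hx with hx | hx
  · rw [abs_of_nonpos (by linarith)]; linarith
  · rw [abs_of_nonneg (by linarith)]; linarith

theorem hasCompactSupport_hat (c : ℝ) : HasCompactSupport (hat c) :=
  HasCompactSupport.intro (isCompact_Icc (a := c - 1) (b := c + 1)) fun _ hx =>
    hat_eq_zero_of_notMem fun h => hx (Set.Ioo_subset_Icc_self h)

theorem m₀_eq_sum_hat (A : ℕ) (ξ : ℝ) : m₀ A ξ = ∑ d ∈ Finset.range (A + 1), hat d ξ := by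
  induction A with
  | zero =>
    rw [zero_add, Finset.sum_range_one]
    simp only [m₀, hat, Nat.cast_zero, sub_zero, abs_eq_max_neg, max_def]
    split_ifs <;> linarith
  | succ A ih =>
    rw [Finset.sum_range_succ, ← ih]
    simp only [m₀, hat, abs_eq_max_neg, max_def]
    push_cast
    split_ifs <;> linarith

theorem integral_m₀_mul {g : ℝ → ℝ} (hg : Continuous g) (A : ℕ) :
    ∫ ξ, m₀ A ξ * g ξ = ∑ d ∈ Finset.range (A + 1), ∫ ξ, hat d ξ * g ξ := by
  simp_rw [m₀_eq_sum_hat, Finset.sum_mul]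
  exact integral_finsetSum _ fun d _ =>
    ((continuous_hat d).mul hg).integrable_of_hasCompactSupport (hasCompactSupport_hat d).mul_right

theorem integral_hat_mul {g : ℝ → ℝ} (hg : Continuous g) (c : ℝ) :
    ∫ x, hat c x * g x
      = (∫ x in (c - 1)..c, (x - (c - 1)) * g x) + ∫ x in c..(c + 1), (c + 1 - x) * g x := by
  have hcont : Continuous fun x => hat c x * g x := (continuous_hat c).mul hg
  rw [← setIntegral_eq_integral_of_forall_compl_eq_zero (s := Set.Ioc (c - 1) (c + 1))
      fun x hx => by rw [hat_eq_zero_of_notMem fun h => hx (Set.Ioo_subset_Ioc_self h), zero_mul],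
    ← intervalIntegral.integral_of_le (by linarith),
    ← intervalIntegral.integral_add_adjacent_intervals (b := c)
      (hcont.intervalIntegrable _ _) (hcont.intervalIntegrable _ _)]
  congr 1 <;> refine intervalIntegral.integral_congr fun x hx => ?_
  · rw [Set.uIcc_of_le (by linarith)] at hx
    simp only [hat, abs_of_nonpos (by linarith [hx.2] : x - c ≤ 0)]
    rw [max_eq_right (by linarith [hx.1])]; ring
  · rw [Set.uIcc_of_le (by linarith)] at hx
    simp only [hat, abs_of_nonneg (by linarith [hx.1] : 0 ≤ x - c)]
    rw [max_eq_right (by linarith [hx.2])]; ring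

theorem integral_derivative_eval (P : ℝ[X]) (a b : ℝ) :
    ∫ x in a..b, (derivative P).eval x = P.eval b - P.eval a :=
  intervalIntegral.integral_eq_sub_of_hasDerivAt (fun x _ => P.hasDerivAt x)
    ((derivative P).continuous.intervalIntegrable a b)

noncomputable def secondDiff (p : ℝ[X]) (c : ℝ) : ℝ :=
  p.eval (c - 1) - 2 * p.eval c + p.eval (c + 1)

theorem integral_hat_mul_iterate_derivative_two (P : ℝ[X]) (c : ℝ) :
    ∫ x, hat c x * (derivative^[2] P).eval x = secondDiff P c := by
  have h₁ : ∫ x in (c - 1)..c, (x - (c - 1)) * (derivative^[2] P).eval x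
      = ((X - C (c - 1)) * derivative P - P).eval c
        - ((X - C (c - 1)) * derivative P - P).eval (c - 1) := by
    rw [← integral_derivative_eval]
    refine intervalIntegral.integral_congr fun x _ => ?_
    simp [derivative_mul]
  have h₂ : ∫ x in c..(c + 1), (c + 1 - x) * (derivative^[2] P).eval x
      = ((C (c + 1) - X) * derivative P + P).eval (c + 1)
        - ((C (c + 1) - X) * derivative P + P).eval c := by
    rw [← integral_derivative_eval]
    refine intervalIntegral.integral_congr fun x _ => ?_
    simp [derivative_mul]
  rw [integral_hat_mul (derivative^[2] P).continuous, h₁, h₂]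
  simp only [secondDiff, eval_add, eval_sub, eval_mul, eval_X, eval_C]
  ring

theorem exists_derivative_eq_natDegree_le (f : ℝ[X]) :
    ∃ P : ℝ[X], derivative P = f ∧ P.natDegree ≤ f.natDegree + 1 := by
  refine ⟨∑ i ∈ Finset.range (f.natDegree + 1), C (f.coeff i / (i + 1)) * X ^ (i + 1), ?_, ?_⟩
  · conv_rhs => rw [f.as_sum_range_C_mul_X_pow]
    rw [derivative_sum]
    refine Finset.sum_congr rfl fun i _ => ?_
    rw [derivative_C_mul_X_pow, Nat.add_sub_cancel]
    congr 1
    push_cast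
    field_simp
  · refine natDegree_sum_le_of_forall_le _ _ fun i hi => ?_
    have := Finset.mem_range.1 hi
    exact (natDegree_C_mul_X_pow_le _ _).trans (by omega)

theorem iterate_derivative_two_eval_eq (P : ℝ[X]) (hP : P.natDegree ≤ 7) (c : ℝ) :
    (derivative^[2] P).eval c = secondDiff P c - (1 / 12) * secondDiff (derivative^[2] P) c
      + (1 / 240) * secondDiff (derivative^[4] P) c
      - (1 / 6048) * secondDiff (derivative^[6] P) c := by
  rw [P.as_sum_range' 8 (by omega)]
  simp only [secondDiff, Finset.sum_range_succ, Finset.sum_range_zero, Function.iterate_succ_apply',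
    Function.iterate_zero_apply, derivative_add, derivative_zero, derivative_monomial, eval_add,
    eval_zero, eval_monomial]
  push_cast
  ring

theorem eval_eq_integral_hat_mul_sub_secondDiff (f : ℝ[X]) (hf : f.natDegree ≤ 5) (c : ℝ) :
    f.eval c = (∫ x, hat c x * f.eval x) - (1 / 12) * secondDiff f c
      + (1 / 240) * secondDiff (derivative^[2] f) c
      - (1 / 6048) * secondDiff (derivative^[4] f) c := by
  obtain ⟨Q, hQ, hQdeg⟩ := exists_derivative_eq_natDegree_le f
  obtain ⟨P, hP, hPdeg⟩ := exists_derivative_eq_natDegree_le Q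
  have hf_eq : f = derivative^[2] P := by rw [← hQ, ← hP]; rfl
  subst hf_eq
  simp only [← Function.iterate_add_apply, integral_hat_mul_iterate_derivative_two]
  exact iterate_derivative_two_eval_eq P (by omega) c

theorem sum_secondDiff (p : ℝ[X]) (A : ℕ) :
    ∑ d ∈ Finset.range (A + 1), secondDiff p d
      = p.eval (-1) + p.eval ((A : ℝ) + 1) - p.eval 0 - p.eval (A : ℝ) := by
  induction A with
  | zero =>
    simp only [zero_add, Finset.sum_range_one, secondDiff, Nat.cast_zero, zero_sub]
    ring
  | succ A ih =>
    rw [Finset.sum_range_succ, ih, secondDiff]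
    push_cast
    ring_nf

/-- Euler–MacLaurin formula for the index of `∂̄_A` on `P¹`, for polynomials of
degree at most `5`. -/
theorem stmt5 (A : ℕ) (f : Polynomial ℝ) (hf : f.degree ≤ 5) :
    ∑ d ∈ Finset.range (A + 1), f.eval (d : ℝ) =
      (∫ ξ : ℝ, m₀ A ξ * f.eval ξ)
      + (1 / 12) * (f.eval 0 + f.eval (A : ℝ) - f.eval (-1) - f.eval ((A : ℝ) + 1))
      - (1 / 240) * ((derivative^[2] f).eval 0 + (derivative^[2] f).eval (A : ℝ)
          - (derivative^[2] f).eval (-1) - (derivative^[2] f).eval ((A : ℝ) + 1))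
      + (1 / 6048) * ((derivative^[4] f).eval 0 + (derivative^[4] f).eval (A : ℝ)
          - (derivative^[4] f).eval (-1) - (derivative^[4] f).eval ((A : ℝ) + 1)) := by
  have hf' : f.natDegree ≤ 5 := natDegree_le_of_degree_le hf
  rw [Finset.sum_congr rfl fun (d : ℕ) _ => eval_eq_integral_hat_mul_sub_secondDiff f hf' (d : ℝ),
    integral_m₀_mul f.continuous]
  simp only [Finset.sum_add_distrib, Finset.sum_sub_distrib, ← Finset.mul_sum, sum_secondDiff]
  ring
end

section
/- Let n be a finite type and A an n×n complex matrix, and let f_A : ℂ → ℂ be defined by f_A(q) = det(∑_{k=0}^{∞} (1/(k+1)!) (qA)^k). Then f_A(0) = 1, and f_A has derivative (trace A)/2 at q = 0. (That is, in the Taylor expansion det_V((e^{qA}−1)/(qA)) = ∑_k q^k T_k(A), one has T_0 = 1 and T_1(A) = (1/2)·Tr(A).) -/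
/-!
Write `F q = ∑ₖ qᵏ/(k+1)! • Aᵏ`. As a power series with infinite radius, `F` is differentiable
with `F 0 = 1` and `F' 0 = A/2`, the coefficient of `q`. Expanding `det (F q)` over permutations,
every term except the one for `σ = 1` contains two off-diagonal entries of `F q`, both vanishing
at `0`, so its derivative there is zero; the diagonal term contributes `∑ᵢ F' 0 i i = Tr A / 2`.
-/

open Nat Matrix

open Filter FormalMultilinearSeries

theorem Matrix.prod_erase_one_apply_perm_eq_zero {n R : Type*} [Fintype n] [DecidableEq n]
    [CommSemiring R] {σ : Equiv.Perm n} (hσ : σ ≠ 1) (i : n) :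
    ∏ j ∈ Finset.univ.erase i, (1 : Matrix n n R) (σ j) j = 0 := by
  obtain ⟨j, hj, hji⟩ := Finset.exists_mem_ne (Equiv.Perm.two_le_card_support_of_ne_one hσ) i
  exact Finset.prod_eq_zero (Finset.mem_erase.2 ⟨hji, Finset.mem_univ j⟩)
    (one_apply_ne (Equiv.Perm.mem_support.1 hj))

theorem Matrix.hasDerivAt_det_of_eq_one {𝕜 n : Type*} [NontriviallyNormedField 𝕜] [Fintype n]
    [DecidableEq n] {F : 𝕜 → Matrix n n 𝕜} {F' : Matrix n n 𝕜} {x : 𝕜} (hF₁ : F x = 1)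
    (hF : ∀ i j, HasDerivAt (fun q => F q i j) (F' i j) x) :
    HasDerivAt (fun q => (F q).det) F'.trace x := by
  simp_rw [det_apply']
  have hterm := fun σ : Equiv.Perm n =>
    (HasDerivAt.fun_finsetProd (u := Finset.univ) fun i _ => hF (σ i) i).const_mul
      (Equiv.Perm.sign σ : 𝕜)
  refine (HasDerivAt.fun_sum fun σ _ => hterm σ).congr_deriv ?_
  rw [Finset.sum_eq_single_of_mem 1 (Finset.mem_univ _)]
  · simp [hF₁, trace]
  · intro σ _ hσ
    simp [hF₁, prod_erase_one_apply_perm_eq_zero hσ]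

section PowerSeries

variable {𝕜 E : Type*} [NontriviallyNormedField 𝕜] [NormedRing E] [NormedAlgebra 𝕜 E]

theorem hasDerivAt_tsum_smul_smul_pow_zero [CompleteSpace E] {c : ℕ → 𝕜}
    (hc : 0 < (ofScalars E c).radius) (a : E) :
    HasDerivAt (fun q : 𝕜 => ∑' k, c k • (q • a) ^ k) (c 1 • a) 0 := by
  have hsum := ((ofScalars E c).hasFPowerSeriesOnBall hc).hasFPowerSeriesAt.hasFDerivAt
  have hsum_eq : (ofScalars E c).sum = fun x => ∑' k, c k • x ^ k := ofScalarsSum_eq_tsum c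
  rw [hsum_eq, ← zero_smul 𝕜 a] at hsum
  refine (hsum.comp_hasDerivAt (0 : 𝕜) ((hasDerivAt_id (0 : 𝕜)).smul_const a)).congr_deriv ?_
  simp [ofScalars]

variable (𝕜 E) in
theorem ofScalars_inv_factorial_succ_radius_eq_top [CharZero 𝕜] [ContinuousSMul ℚ 𝕜] :
    (ofScalars E fun k => ((k + 1)! : 𝕜)⁻¹).radius = ⊤ := by
  have hfact (k : ℕ) : ((k + 1)! : 𝕜) ≠ 0 := Nat.cast_ne_zero.2 (Nat.factorial_ne_zero _)
  refine ofScalars_radius_eq_top_of_tendsto E _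
    (Eventually.of_forall fun k => inv_ne_zero (hfact k)) ?_
  simp_rw [← norm_div, Nat.factorial_succ (_ + 1), Nat.cast_mul, _root_.mul_inv_rev,
    mul_div_right_comm, inv_div_inv, div_self (hfact _), one_mul]
  apply norm_zero (E := 𝕜) ▸ Tendsto.norm
  exact (tendsto_add_atTop_iff_nat (f := fun k => (k : 𝕜)⁻¹) 2).2 tendsto_inv_atTop_nhds_zero_nat

theorem hasDerivAt_tsum_inv_factorial_succ_smul_pow_zero [CharZero 𝕜] [ContinuousSMul ℚ 𝕜]
    [CompleteSpace E] (a : E) :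
    HasDerivAt (fun q : 𝕜 => ∑' k : ℕ, ((k + 1)! : 𝕜)⁻¹ • (q • a) ^ k) ((2 : 𝕜)⁻¹ • a) 0 := by
  have h := hasDerivAt_tsum_smul_smul_pow_zero
    (by rw [ofScalars_inv_factorial_succ_radius_eq_top 𝕜 E]; exact WithTop.top_pos) a
  simpa [one_div] using h

end PowerSeries

section MatrixNorm

-- any norm on matrices would do; the operator norm makes them a normed algebra
attribute [local instance] Matrix.linftyOpNormedRing Matrix.linftyOpNormedAlgebra

theorem Matrix.hasDerivAt_tsum_inv_factorial_succ_smul_pow_zero_apply {𝕜 n : Type*} [RCLike 𝕜]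
    [Fintype n] [DecidableEq n] (A : Matrix n n 𝕜) (i j : n) :
    HasDerivAt (fun q : 𝕜 => (∑' k : ℕ, ((k + 1)! : 𝕜)⁻¹ • (q • A) ^ k) i j)
      (((2 : 𝕜)⁻¹ • A) i j) 0 :=
  (entryLinearMap 𝕜 𝕜 i j).toContinuousLinearMap.hasFDerivAt.comp_hasDerivAt 0
    (hasDerivAt_tsum_inv_factorial_succ_smul_pow_zero (E := Matrix n n 𝕜) A)

end MatrixNorm

/-- In the Taylor expansion `det((e^{qA}-1)/(qA)) = ∑ₖ qᵏ Tₖ(A)`, one has `T₀ = 1` and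
`T₁(A) = Tr(A)/2`. -/
theorem stmt9 {n : Type*} [Fintype n] [DecidableEq n] (A : Matrix n n ℂ) :
    (fun q : ℂ => (∑' k : ℕ, ((k + 1)! : ℂ)⁻¹ • (q • A) ^ k).det) 0 = 1 ∧
    HasDerivAt (fun q : ℂ => (∑' k : ℕ, ((k + 1)! : ℂ)⁻¹ • (q • A) ^ k).det)
      (A.trace / 2) 0 := by
  have hF₀ : ∑' k : ℕ, ((k + 1)! : ℂ)⁻¹ • ((0 : ℂ) • A) ^ k = 1 := by
    rw [zero_smul, tsum_eq_single 0 fun k hk => by simp [zero_pow hk]]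
    simp
  refine ⟨by simp only [hF₀, det_one], ?_⟩
  refine (hasDerivAt_det_of_eq_one hF₀
    (hasDerivAt_tsum_inv_factorial_succ_smul_pow_zero_apply A)).congr_deriv ?_
  rw [trace_smul, smul_eq_mul, div_eq_inv_mul]
end

section
/- First Taylor coefficient of D(q,s,A): let n be a finite type and s, A n×n complex matrices with 1 − s invertible. Then the function q ↦ det(1 − s·exp(qA)) has derivative −det(1 − s) · trace((1 − s)⁻¹ · s · A) at q = 0, and its value at q = 0 is det(1 − s). -/
/-!
Jacobi's formula: the determinant is multilinear in the rows, so along a curve `M(q)` its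
derivative is `∑ᵢ det (M with row i replaced by M'ᵢ) = tr (adj M · M')`. Here `M(0) = 1 - s`,
`M'(0) = -s A`, and `adj (1 - s) = det (1 - s) • (1 - s)⁻¹` because `1 - s` is invertible.
-/

open Matrix

namespace Matrix

variable {n 𝕜 : Type*} [Fintype n] [DecidableEq n]

theorem sum_det_updateRow [CommRing 𝕜] (M M' : Matrix n n 𝕜) :
    ∑ i, (M.updateRow i (M' i)).det = (adjugate M * M').trace := by
  rw [trace_mul_comm]
  refine Finset.sum_congr rfl fun i _ => ?_
  rw [← cramer_transpose_apply, cramer_eq_adjugate_mulVec, ← adjugate_transpose]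
  simp [mulVec, dotProduct, mul_apply, mul_comm]

theorem adjugate_eq_det_smul_inv [CommRing 𝕜] {M : Matrix n n 𝕜} (h : IsUnit M.det) :
    adjugate M = M.det • M⁻¹ := by
  rw [inv_def, smul_smul, Ring.mul_inverse_cancel _ h, one_smul]

def detContinuousMultilinearMap [NontriviallyNormedField 𝕜] :
    ContinuousMultilinearMap 𝕜 (fun _ : n => n → 𝕜) 𝕜 :=
  ⟨detRowAlternating.toMultilinearMap, (continuous_id (X := Matrix n n 𝕜)).matrix_det⟩

theorem hasDerivAt_det [NontriviallyNormedField 𝕜] {f : 𝕜 → Matrix n n 𝕜} {f' : Matrix n n 𝕜}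
    {t : 𝕜} (hf : HasDerivAt f f' t) :
    HasDerivAt (fun t => (f t).det) ((adjugate (f t) * f').trace) t := by
  refine ((detContinuousMultilinearMap.hasFDerivAt (f t)).comp_hasDerivAt t hf).congr_deriv ?_
  exact (ContinuousMultilinearMap.linearDeriv_apply _ _ _).trans (sum_det_updateRow _ _)

section LinftyOp

attribute [local instance] Matrix.linftyOpNormedRing Matrix.linftyOpNormedAlgebra

theorem hasDerivAt_one_sub_mul_exp_smul [RCLike 𝕜] (s A : Matrix n n 𝕜) :
    HasDerivAt (fun q : 𝕜 => 1 - s * NormedSpace.exp (q • A)) (-(s * A)) 0 := by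
  have hexp := hasDerivAt_exp_smul_const (𝕂 := 𝕜) A 0
  simp only [zero_smul, NormedSpace.exp_zero, one_mul] at hexp
  exact (hexp.const_mul s).const_sub 1

end LinftyOp

end Matrix

/-- First Taylor coefficient of `D(q,s,A) = det(1 - s e^{qA})`: its value at `q = 0`
is `det(1 - s)` and its derivative at `q = 0` is `-det(1 - s)·Tr((1 - s)⁻¹ s A)`. -/
theorem stmt15 {n : Type*} [Fintype n] [DecidableEq n] (s A : Matrix n n ℂ)
    (hs : IsUnit (1 - s)) :
    HasDerivAt (fun q : ℂ => (1 - s * NormedSpace.exp (q • A)).det)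
        (-(1 - s).det * ((1 - s)⁻¹ * s * A).trace) 0 ∧
      (fun q : ℂ => (1 - s * NormedSpace.exp (q • A)).det) 0 = (1 - s).det := by
  have hval : 1 - s * NormedSpace.exp ((0 : ℂ) • A) = 1 - s := by
    rw [zero_smul, NormedSpace.exp_zero, mul_one]
  refine ⟨?_, congrArg det hval⟩
  have hD := hasDerivAt_det (hasDerivAt_one_sub_mul_exp_smul s A)
  rw [hval, adjugate_eq_det_smul_inv ((isUnit_iff_isUnit_det _).mp hs)] at hD
  refine hD.congr_deriv ?_
  rw [smul_mul_assoc, trace_smul, smul_eq_mul, mul_neg, trace_neg, mul_assoc]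
  ring
end
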